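/- arXiv:2010.05561 — 3 statements merged into one kernel-verified Lean document; each statement's English description precedes it below -/
import Mathlib

section
/- Let 0 < α < d, 1 ≤ p < d/α, and f ∈ L^p(ℝ^d) be nonnegative. If x ∈ ℝ^d is a Lebesgue point of f, then the supremum defining the uncentered fractional maximal function M_α f(x) = sup_{B ∋ x} r(B)^α f_B is attained: there exists a ball B with x ∈ closure(B) such that r(B)^α f_B = M_α f(x). -/
/-!
Write `g z r = r ^ α * setAvg (ball z r) f`. Hölder's inequality gives
`g z r ≤ C r ^ (α - d / p)`, which tends to `0` as `r → ∞` because `α p < d`. At a Lebesgue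
point `x`, a ball of radius `r` through `x` lies in `ball x (2 r)`, so its average is at most
`2 ^ d (1 + f x)` for small `r`, and `g → 0` as `r → 0` uniformly over balls through `x`. Since
`g` is jointly continuous for `r > 0`, the supremum is attained on the compact set of closed balls
through `x` whose radii lie in a fixed interval `[ε, R]`.
-/

open MeasureTheory Metric Set Filter
open scoped ENNReal NNReal

noncomputable section

abbrev Euc (d : ℕ) : Type := EuclideanSpace ℝ (Fin d)

def setAvg {d : ℕ} (s : Set (Euc d)) (f : Euc d → ℝ) : ℝ :=
  (volume s).toReal⁻¹ * ∫ y in s, f y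

/-- The uncentered fractional Hardy–Littlewood maximal function. -/
def Mu (d : ℕ) (α : ℝ) (f : Euc d → ℝ) (x : Euc d) : ℝ :=
  sSup {v | ∃ z : Euc d, ∃ r : ℝ, 0 < r ∧ x ∈ ball z r ∧ v = r ^ α * setAvg (ball z r) f}

open scoped Topology

theorem MeasureTheory.LocallyIntegrable.integrableOn_ball {X F : Type*} [PseudoMetricSpace X]
    [ProperSpace X] [MeasurableSpace X] [NormedAddCommGroup F] {μ : Measure X} {f : X → F}
    (hf : LocallyIntegrable f μ) (z : X) (r : ℝ) : IntegrableOn f (ball z r) μ :=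
  (hf.integrableOn_isCompact (isCompact_closedBall z r)).mono_set ball_subset_closedBall

theorem eventually_mem_ball_iff {X : Type*} [PseudoMetricSpace X] {y z : X} {r : ℝ}
    (hy : dist y z ≠ r) :
    ∀ᶠ w : X × ℝ in 𝓝 (z, r), (y ∈ ball w.1 w.2 ↔ y ∈ ball z r) := by
  have hdist : ContinuousAt (fun w : X × ℝ => dist y w.1) (z, r) :=
    (continuous_const.dist continuous_fst).continuousAt
  rcases hy.lt_or_gt with hlt | hgt
  · filter_upwards [hdist.eventually_lt continuousAt_snd hlt] with w hw
    exact iff_of_true hw hlt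
  · filter_upwards [continuousAt_snd.eventually_lt hdist hgt] with w hw
    exact iff_of_false (not_lt.2 hw.le) (not_lt.2 hgt.le)

/-- Spheres are null for a Haar measure, so the indicator of `ball w.1 w.2` converges almost
everywhere as `w → (z, r)`. -/
theorem continuousAt_setIntegral_ball {E F : Type*} [NormedAddCommGroup E] [NormedSpace ℝ E]
    [MeasurableSpace E] [BorelSpace E] [FiniteDimensional ℝ E] [NormedAddCommGroup F]
    [NormedSpace ℝ F] (μ : Measure E) [μ.IsAddHaarMeasure] {f : E → F}
    (hf : LocallyIntegrable f μ) (z : E) {r : ℝ} (hr : r ≠ 0) :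
    ContinuousAt (fun w : E × ℝ => ∫ y in ball w.1 w.2, f y ∂μ) (z, r) := by
  simp_rw [← integral_indicator measurableSet_ball]
  refine continuousAt_of_dominated (bound := (ball z (r + 2)).indicator fun y => ‖f y‖)
    (Eventually.of_forall fun w =>
      ((hf.integrableOn_ball _ _).integrable_indicator measurableSet_ball).aestronglyMeasurable)
    ?_ ((integrable_indicator_iff measurableSet_ball).2 (hf.integrableOn_ball z (r + 2)).norm) ?_
  · filter_upwards [ball_mem_nhds (z, r) one_pos] with w hw
    rw [mem_ball, Prod.dist_eq, max_lt_iff, Real.dist_eq, abs_lt] at hw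
    have hsub : ball w.1 w.2 ⊆ ball z (r + 2) := ball_subset_ball' (by linarith [hw.2.2])
    exact Eventually.of_forall fun y =>
      (norm_indicator_le_of_subset hsub f y).trans_eq (norm_indicator_eq_indicator_norm f y)
  · have hsphere : ∀ᵐ y ∂μ, y ∉ sphere z r :=
      compl_mem_ae_iff.2 (Measure.addHaar_sphere_of_ne_zero μ z hr)
    filter_upwards [hsphere] with y hy
    exact tendsto_const_nhds.congr'
      ((eventually_mem_ball_iff hy).mono fun w hw => indicator_eq_indicator hw.symm rfl)

theorem setIntegral_le_eLpNorm_mul_measure_rpow {α : Type*} [MeasurableSpace α] {μ : Measure α}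
    {p : ℝ} (hp : 1 ≤ p) {f : α → ℝ} (hf : MemLp f (ENNReal.ofReal p) μ) {s : Set α}
    (hs : μ s ≠ ∞) :
    ∫ y in s, f y ∂μ ≤
      (eLpNorm f (ENNReal.ofReal p) μ).toReal * (μ s).toReal ^ (1 - 1 / p) := by
  have hp0 : 0 < p := one_pos.trans_le hp
  have hholder : eLpNorm f 1 (μ.restrict s) ≤
      eLpNorm f (ENNReal.ofReal p) (μ.restrict s) * μ s ^ (1 - 1 / p) := by
    simpa [ENNReal.toReal_ofReal hp0.le] using eLpNorm_le_eLpNorm_mul_rpow_measure_univ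
      (μ := μ.restrict s) (ENNReal.one_le_ofReal.2 hp) (hf.1.restrict (s := s))
  have hfin : eLpNorm f (ENNReal.ofReal p) μ * μ s ^ (1 - 1 / p) ≠ ∞ :=
    ENNReal.mul_ne_top hf.2.ne (ENNReal.rpow_ne_top_of_nonneg
      (sub_nonneg.2 ((div_le_one hp0).2 hp)) hs)
  calc ∫ y in s, f y ∂μ ≤ ‖∫ y in s, f y ∂μ‖ := Real.le_norm_self _
    _ ≤ (eLpNorm f 1 (μ.restrict s)).toReal := by
      simpa only [eLpNorm_one_eq_lintegral_enorm, ofReal_norm] using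
        norm_integral_le_lintegral_norm (μ := μ.restrict s) f
    _ ≤ (eLpNorm f (ENNReal.ofReal p) μ * μ s ^ (1 - 1 / p)).toReal :=
      ENNReal.toReal_mono hfin
        (hholder.trans (mul_le_mul_left (eLpNorm_mono_measure f Measure.restrict_le_self) _))
    _ = _ := by rw [ENNReal.toReal_mul, ENNReal.toReal_rpow]

namespace Euc

variable {d : ℕ}

theorem volume_ball_toReal (z : Euc d) {r : ℝ} (hr : 0 < r) :
    (volume (ball z r)).toReal = r ^ d * (volume (ball (0 : Euc d) 1)).toReal := by
  rw [Measure.addHaar_ball_of_pos volume z hr, finrank_euclideanSpace_fin,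
    ENNReal.toReal_mul, ENNReal.toReal_ofReal (by positivity)]

theorem volume_unitBall_toReal_pos : 0 < (volume (ball (0 : Euc d) 1)).toReal :=
  ENNReal.toReal_pos (measure_ball_pos volume 0 one_pos).ne' measure_ball_lt_top.ne

theorem setAvg_nonneg {s : Set (Euc d)} {f : Euc d → ℝ} (hf : 0 ≤ f) : 0 ≤ setAvg s f :=
  mul_nonneg (inv_nonneg.2 ENNReal.toReal_nonneg) (integral_nonneg hf)

theorem continuousAt_rpow_mul_setAvg_ball {f : Euc d → ℝ} (hf : LocallyIntegrable f volume)
    (α : ℝ) (z : Euc d) {r : ℝ} (hr : 0 < r) :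
    ContinuousAt (fun w : Euc d × ℝ => w.2 ^ α * setAvg (ball w.1 w.2) f) (z, r) := by
  set κ := (volume (ball (0 : Euc d) 1)).toReal
  have hκ : 0 < κ := volume_unitBall_toReal_pos
  have hpow : ContinuousAt (fun w : Euc d × ℝ => w.2 ^ α) (z, r) :=
    continuousAt_snd.rpow_const (Or.inl hr.ne')
  have hvol : ContinuousAt (fun w : Euc d × ℝ => (w.2 ^ d * κ)⁻¹) (z, r) :=
    ((continuous_snd.pow d).mul continuous_const).continuousAt.inv₀
      (mul_pos (pow_pos hr d) hκ).ne'
  refine (hpow.mul (hvol.mul (continuousAt_setIntegral_ball volume hf z hr.ne'))).congr ?_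
  filter_upwards [continuousAt_snd.eventually (lt_mem_nhds hr)] with w hw
  rw [setAvg, volume_ball_toReal w.1 hw]
  rfl

theorem setAvg_le_eLpNorm_mul_rpow {p : ℝ} (hp : 1 ≤ p) {f : Euc d → ℝ}
    (hf : MemLp f (ENNReal.ofReal p) volume) {s : Set (Euc d)} (hs : volume s ≠ ∞)
    (hs₀ : volume s ≠ 0) :
    setAvg s f ≤
      (eLpNorm f (ENNReal.ofReal p) volume).toReal * (volume s).toReal ^ (-(1 / p)) := by
  have hV : 0 < (volume s).toReal := ENNReal.toReal_pos hs₀ hs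
  calc setAvg s f
      ≤ (volume s).toReal⁻¹ * ((eLpNorm f (ENNReal.ofReal p) volume).toReal *
          (volume s).toReal ^ (1 - 1 / p)) :=
        mul_le_mul_of_nonneg_left (setIntegral_le_eLpNorm_mul_measure_rpow hp hf hs)
          (inv_nonneg.2 hV.le)
    _ = _ := by
      rw [Real.rpow_sub hV, Real.rpow_one, Real.rpow_neg hV.le]
      field_simp

theorem rpow_mul_setAvg_ball_le {p : ℝ} (hp : 1 ≤ p) {f : Euc d → ℝ}
    (hf : MemLp f (ENNReal.ofReal p) volume) (α : ℝ) (z : Euc d) {r : ℝ} (hr : 0 < r) :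
    r ^ α * setAvg (ball z r) f ≤ (eLpNorm f (ENNReal.ofReal p) volume).toReal *
      (volume (ball (0 : Euc d) 1)).toReal ^ (-(1 / p)) * r ^ (α - d / p) := by
  have hκ : 0 < (volume (ball (0 : Euc d) 1)).toReal := volume_unitBall_toReal_pos
  have havg := setAvg_le_eLpNorm_mul_rpow hp hf measure_ball_lt_top.ne
    (measure_ball_pos volume z hr).ne'
  rw [volume_ball_toReal z hr, Real.mul_rpow (by positivity) hκ.le, ← Real.rpow_natCast,
    ← Real.rpow_mul hr.le] at havg
  calc r ^ α * setAvg (ball z r) f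
      ≤ r ^ α * ((eLpNorm f (ENNReal.ofReal p) volume).toReal *
          (r ^ ((d : ℝ) * -(1 / p)) * (volume (ball (0 : Euc d) 1)).toReal ^ (-(1 / p)))) :=
        mul_le_mul_of_nonneg_left havg (by positivity)
    _ = _ := by
      rw [sub_eq_add_neg, Real.rpow_add hr]
      ring_nf

theorem setAvg_ball_le_two_pow_mul {f : Euc d → ℝ} (hf : 0 ≤ f)
    (hloc : LocallyIntegrable f volume)
    {x z : Euc d} {r : ℝ} (hr : 0 < r) (hx : x ∈ ball z r) :
    setAvg (ball z r) f ≤ 2 ^ d * setAvg (ball x (2 * r)) f := by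
  have hsub : ball z r ⊆ ball x (2 * r) :=
    ball_subset_ball' (by rw [dist_comm]; linarith [mem_ball.1 hx])
  have hint : ∫ y in ball z r, f y ≤ ∫ y in ball x (2 * r), f y :=
    setIntegral_mono_set (hloc.integrableOn_ball _ _) (Eventually.of_forall hf) hsub.eventuallyLE
  have hκ : 0 < (volume (ball (0 : Euc d) 1)).toReal := volume_unitBall_toReal_pos
  rw [setAvg, setAvg, volume_ball_toReal z hr, volume_ball_toReal x (by positivity), mul_pow]
  calc (r ^ d * (volume (ball (0 : Euc d) 1)).toReal)⁻¹ * ∫ y in ball z r, f y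
      ≤ (r ^ d * (volume (ball (0 : Euc d) 1)).toReal)⁻¹ * ∫ y in ball x (2 * r), f y :=
        mul_le_mul_of_nonneg_left hint (by positivity)
    _ = _ := by field_simp

theorem setAvg_le_setAvg_abs_sub_add {f : Euc d → ℝ} {s : Set (Euc d)} (hs : volume s ≠ ∞)
    (hs₀ : volume s ≠ 0) (hf : IntegrableOn f s) (c : ℝ) :
    setAvg s f ≤ setAvg s (fun y => |f y - c|) + c := by
  have hV : 0 < (volume s).toReal := ENNReal.toReal_pos hs₀ hs
  have habs : IntegrableOn (fun y => |f y - c|) s := (hf.sub (integrableOn_const hs)).abs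
  have hint : ∫ y in s, f y ≤ ∫ y in s, (|f y - c| + c) :=
    integral_mono hf (habs.add (integrableOn_const hs)) fun y => by
      linarith [le_abs_self (f y - c)]
  rw [integral_add habs (integrableOn_const hs), setIntegral_const, smul_eq_mul,
    measureReal_def] at hint
  calc setAvg s f
      ≤ (volume s).toReal⁻¹ * ((∫ y in s, |f y - c|) + (volume s).toReal * c) :=
        mul_le_mul_of_nonneg_left hint (inv_nonneg.2 hV.le)
    _ = _ := by rw [setAvg]; field_simp

end Euc

namespace Euc

variable {d : ℕ}

theorem eventually_setAvg_ball_le_of_tendsto {f : Euc d → ℝ} (hf : 0 ≤ f)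
    (hloc : LocallyIntegrable f volume) {x : Euc d}
    (hleb : Tendsto (fun r => setAvg (ball x r) (fun y => |f y - f x|)) (𝓝[>] 0) (𝓝 0)) :
    ∀ᶠ r in 𝓝[>] 0, ∀ z, x ∈ ball z r → setAvg (ball z r) f ≤ 2 ^ d * (1 + f x) := by
  have hdouble : Tendsto (fun r : ℝ => 2 * r) (𝓝[>] 0) (𝓝[>] 0) :=
    tendsto_nhdsWithin_of_tendsto_nhds_of_eventually_within _
      (by simpa using ((continuous_const_mul (2 : ℝ)).tendsto 0).mono_left nhdsWithin_le_nhds)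
      (eventually_nhdsWithin_of_forall fun r (hr : 0 < r) => mul_pos two_pos hr)
  filter_upwards [(hleb.comp hdouble).eventually (gt_mem_nhds one_pos), self_mem_nhdsWithin]
    with r hlt (hr : 0 < r) z hx
  have h2r : 0 < 2 * r := mul_pos two_pos hr
  calc setAvg (ball z r) f ≤ 2 ^ d * setAvg (ball x (2 * r)) f :=
        setAvg_ball_le_two_pow_mul hf hloc hr hx
    _ ≤ 2 ^ d * (setAvg (ball x (2 * r)) (fun y => |f y - f x|) + f x) := by
        gcongr
        exact setAvg_le_setAvg_abs_sub_add measure_ball_lt_top.ne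
          (measure_ball_pos volume x h2r).ne' (hloc.integrableOn_ball x _) (f x)
    _ ≤ 2 ^ d * (1 + f x) := by
        gcongr
        exact hlt.le

theorem eventually_rpow_mul_setAvg_ball_le_of_tendsto {α : ℝ} (hα : 0 < α) {f : Euc d → ℝ}
    (hf : 0 ≤ f) (hloc : LocallyIntegrable f volume) {x : Euc d}
    (hleb : Tendsto (fun r => setAvg (ball x r) (fun y => |f y - f x|)) (𝓝[>] 0) (𝓝 0))
    {η : ℝ} (hη : 0 < η) :
    ∀ᶠ r in 𝓝[>] 0, ∀ z, x ∈ ball z r → r ^ α * setAvg (ball z r) f ≤ η := by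
  have hdecay : Tendsto (fun r : ℝ => r ^ α * (2 ^ d * (1 + f x))) (𝓝[>] 0) (𝓝 0) := by
    simpa [Real.zero_rpow hα.ne'] using
      ((continuousAt_id (x := (0 : ℝ)).rpow_const (Or.inr hα.le)).tendsto.mul_const
        (2 ^ d * (1 + f x))).mono_left nhdsWithin_le_nhds
  filter_upwards [hdecay.eventually (ge_mem_nhds hη),
    eventually_setAvg_ball_le_of_tendsto hf hloc hleb, self_mem_nhdsWithin]
    with r hsmall havg (hr : 0 < r) z hx
  exact (mul_le_mul_of_nonneg_left (havg z hx) (Real.rpow_nonneg hr.le α)).trans hsmall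

theorem eventually_atTop_rpow_mul_setAvg_ball_le {p α : ℝ} (hp : 1 ≤ p) {f : Euc d → ℝ}
    (hf : MemLp f (ENNReal.ofReal p) volume) (hαp : α < d / p) {η : ℝ} (hη : 0 < η) :
    ∀ᶠ r in atTop, ∀ z : Euc d, r ^ α * setAvg (ball z r) f ≤ η := by
  set C := (eLpNorm f (ENNReal.ofReal p) volume).toReal *
    (volume (ball (0 : Euc d) 1)).toReal ^ (-(1 / p))
  have hdecay : Tendsto (fun r : ℝ => C * r ^ (α - d / p)) atTop (𝓝 0) := by
    simpa using (tendsto_rpow_neg_atTop (sub_pos.2 hαp)).const_mul C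
  filter_upwards [hdecay.eventually (ge_mem_nhds hη), eventually_gt_atTop 0] with r hlarge hr z
  exact (rpow_mul_setAvg_ball_le hp hf α z hr).trans hlarge

end Euc

section BallValues

variable {X : Type*} [PseudoMetricSpace X]

/-- `Mu d α f x` is definitionally
`sSup (ballValues (fun z r => r ^ α * setAvg (ball z r) f) x)`. -/
def ballValues (g : X → ℝ → ℝ) (x : X) : Set ℝ :=
  {v | ∃ z : X, ∃ r : ℝ, 0 < r ∧ x ∈ ball z r ∧ v = g z r}

theorem le_sSup_ballValues {g : X → ℝ → ℝ} {x z : X} {r : ℝ}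
    (hbdd : BddAbove (ballValues g x))
    (hr : 0 < r) (hx : x ∈ closedBall z r) (hg : ContinuousAt (Function.uncurry g) (z, r)) :
    g z r ≤ sSup (ballValues g x) := by
  have hgz : ContinuousAt (g z) r := hg.comp (f := fun t => (z, t)) (by fun_prop)
  refine le_of_tendsto (hgz.tendsto.mono_left (nhdsWithin_le_nhds (s := Ioi r))) ?_
  filter_upwards [self_mem_nhdsWithin] with t (ht : r < t)
  exact le_csSup hbdd ⟨z, t, hr.trans ht, (mem_closedBall.1 hx).trans_lt ht, rfl⟩

variable [ProperSpace X]

/-- Balls through `x` with radius in a compact range `[ε, R]` have centres in a compact set, so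
a continuous `g` attains a maximum over their closures. -/
theorem exists_forall_ballValues_le_max {g : X → ℝ → ℝ} {x : X}
    (hg : ∀ z, ∀ r > 0, ContinuousAt (Function.uncurry g) (z, r)) {η : ℝ}
    (hsmall : ∀ᶠ r in 𝓝[>] 0, ∀ z, x ∈ ball z r → g z r ≤ η)
    (hlarge : ∀ᶠ r in atTop, ∀ z, x ∈ ball z r → g z r ≤ η) :
    ∃ z r, 0 < r ∧ x ∈ closedBall z r ∧ ∀ v ∈ ballValues g x, v ≤ max η (g z r) := by
  obtain ⟨ε, hε, hε_small⟩ := (nhdsGT_basis (0 : ℝ)).eventually_iff.1 hsmall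
  obtain ⟨R, hR_large⟩ := eventually_atTop.1 hlarge
  set K : Set (X × ℝ) := {w | dist x w.1 ≤ w.2} ∩ Prod.snd ⁻¹' Icc ε (max ε R)
  have hK : IsCompact K :=
    ((isCompact_closedBall x (max ε R)).prod isCompact_Icc).of_isClosed_subset
      ((isClosed_le (continuous_const.dist continuous_fst) continuous_snd).inter
        (isClosed_Icc.preimage continuous_snd))
      fun w hw => ⟨mem_closedBall'.2 (hw.1.trans hw.2.2), hw.2⟩
  have hxK : (x, ε) ∈ K := ⟨by simpa using hε.le, le_rfl, le_max_left ε R⟩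
  obtain ⟨w, hwK, hwmax⟩ := hK.exists_isMaxOn ⟨_, hxK⟩
    fun w hw => (hg w.1 w.2 (hε.trans_le hw.2.1)).continuousWithinAt
  refine ⟨w.1, w.2, hε.trans_le hwK.2.1, hwK.1, ?_⟩
  rintro v ⟨z, r, hr, hx, rfl⟩
  rcases lt_or_ge r ε with hrε | hεr
  · exact le_max_of_le_left (hε_small ⟨hr, hrε⟩ z hx)
  rcases le_or_gt R r with hRr | hrR
  · exact le_max_of_le_left (hR_large r hRr z hx)
  · exact le_max_of_le_right
      (hwmax (show (z, r) ∈ K from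
        ⟨(mem_ball.1 hx).le, hεr, hrR.le.trans (le_max_right ε R)⟩))

theorem exists_eq_sSup_ballValues {g : X → ℝ → ℝ} {x : X}
    (hg : ∀ z, ∀ r > 0, ContinuousAt (Function.uncurry g) (z, r))
    (hg₀ : ∀ z, ∀ r > 0, 0 ≤ g z r)
    (hsmall : ∀ η > 0, ∀ᶠ r in 𝓝[>] 0, ∀ z, x ∈ ball z r → g z r ≤ η)
    (hlarge : ∀ η > 0, ∀ᶠ r in atTop, ∀ z, x ∈ ball z r → g z r ≤ η) :
    ∃ z r, 0 < r ∧ x ∈ closedBall z r ∧ g z r = sSup (ballValues g x) := by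
  have hx : g x 1 ∈ ballValues g x := ⟨x, 1, one_pos, mem_ball_self one_pos, rfl⟩
  have hbdd : BddAbove (ballValues g x) := by
    obtain ⟨z, r, -, -, hle⟩ :=
      exists_forall_ballValues_le_max hg (hsmall 1 one_pos) (hlarge 1 one_pos)
    exact ⟨_, hle⟩
  rcases le_or_gt (sSup (ballValues g x)) 0 with hS | hS
  · exact ⟨x, 1, one_pos, mem_closedBall_self zero_le_one,
      le_antisymm (le_csSup hbdd hx) (hS.trans (hg₀ x 1 one_pos))⟩
  -- Balls that are too small or too large give at most half the supremum.
  obtain ⟨z, r, hr, hxz, hle⟩ :=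
    exists_forall_ballValues_le_max hg (hsmall _ (half_pos hS)) (hlarge _ (half_pos hS))
  refine ⟨z, r, hr, hxz, le_antisymm (le_sSup_ballValues hbdd hr hxz (hg z r hr)) ?_⟩
  rcases le_max_iff.1 (csSup_le ⟨_, hx⟩ hle) with h | h
  · linarith
  · exact h

end BallValues

theorem stmt1_general (d : ℕ) (α p : ℝ) (hα : 0 < α)
    (hp : 1 ≤ p) (hpd : p < d / α)
    (f : Euc d → ℝ) (hf : 0 ≤ f) (hfp : MemLp f (ENNReal.ofReal p) volume)
    (x : Euc d)
    (hleb : Tendsto (fun r => setAvg (ball x r) (fun y => |f y - f x|))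
      (nhdsWithin 0 (Ioi 0)) (nhds 0)) :
    ∃ z : Euc d, ∃ r : ℝ, 0 < r ∧ x ∈ closure (ball z r) ∧
      r ^ α * setAvg (ball z r) f = Mu d α f x := by
  have hloc : LocallyIntegrable f volume := hfp.locallyIntegrable (ENNReal.one_le_ofReal.2 hp)
  have hαp : α < d / p := by
    rw [lt_div_iff₀ hα] at hpd
    rw [lt_div_iff₀ (one_pos.trans_le hp)]
    linarith
  obtain ⟨z, r, hr, hx, hmax⟩ :=
    exists_eq_sSup_ballValues (g := fun z r => r ^ α * setAvg (ball z r) f)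
      (fun z r hr => Euc.continuousAt_rpow_mul_setAvg_ball hloc α z hr)
      (fun z r hr => mul_nonneg (Real.rpow_nonneg hr.le α) (Euc.setAvg_nonneg hf))
      (fun η hη => Euc.eventually_rpow_mul_setAvg_ball_le_of_tendsto hα hf hloc hleb hη)
      (fun η hη => (Euc.eventually_atTop_rpow_mul_setAvg_ball_le hp hfp hαp hη).mono
        fun r h z _ => h z)
  exact ⟨z, r, hr, by rwa [closure_ball z hr.ne'], hmax⟩

theorem stmt1 (d : ℕ) (α p : ℝ) (hα : 0 < α) (hαd : α < d)
    (hp : 1 ≤ p) (hpd : p < d / α)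
    (f : Euc d → ℝ) (hf : 0 ≤ f) (hfp : MemLp f (ENNReal.ofReal p) volume)
    (x : Euc d)
    (hleb : Tendsto (fun r => setAvg (ball x r) (fun y => |f y - f x|))
      (nhdsWithin 0 (Ioi 0)) (nhds 0)) :
    ∃ z : Euc d, ∃ r : ℝ, 0 < r ∧ x ∈ closure (ball z r) ∧
      r ^ α * setAvg (ball z r) f = Mu d α f x :=
  stmt1_general d α p hα hp hpd f hf hfp x hleb
end
end

section
/- Let 0 < α < d and let f ∈ L^∞(ℝ^d) be nonnegative with bounded variation. Then the uncentered fractional maximal function M_α f is locally Lipschitz. More precisely, on any ball B on which M_α f is positive, there is r_0 > 0 such that only balls of radius at least r_0 are relevant in the supremum, and M_α f is Lipschitz on B with constant σ_d^{-1} r_0^{α-d} Var(f). -/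
/-!
Pairing `f` with `∂_w g` for a test function `|g| ≤ 1` and `‖w‖ ≤ 1` is bounded by `Var f`, so
`h ↦ ∫ f(y) g(y - h) dy` (a convolution of `f` with `g(-·)`) is `Var f`-Lipschitz; approximating
the indicator of a ball by bumps, so is `p ↦ ∫_{B(p, r)} f`. Since
`r^α ⨍_{B(z,r)} f = σ_d⁻¹ r^(α-d) ∫_{B(z,r)} f`, translating a ball together with the point changes
its scaled average by at most `σ_d⁻¹ r^(α-d) Var f` times the displacement. If `M_α f > 0` at one
point, some ball carries mass and `M_α f > 0` everywhere; a large ball containing `B(z, R)` then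
beats every ball of radius below some `r₀`, because `r^α ⨍ f ≤ r^α ‖f‖_∞`, and on radii `≥ r₀`
the factor `r^(α-d) ≤ r₀^(α-d)` gives the Lipschitz bound. Otherwise `M_α f ≡ 0`.
-/

open MeasureTheory Metric Set Filter
open scoped ENNReal NNReal

noncomputable section

/-- The set of integrals `∫ f div φ` over admissible test vector fields `φ`. -/
def divSet {d : ℕ} (f : Euc d → ℝ) : Set ℝ :=
  {v | ∃ φ : Euc d → Euc d, ContDiff ℝ 1 φ ∧ HasCompactSupport φ ∧ (∀ x, ‖φ x‖ ≤ 1) ∧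
    v = ∫ x, f x * ∑ i, fderiv ℝ φ x (EuclideanSpace.single i (1 : ℝ)) i}

/-- The total variation of `f`. -/
def variation {d : ℕ} (f : Euc d → ℝ) : ℝ := sSup (divSet f)

open scoped Convolution Topology

section Variation
variable {d : ℕ} {f : Euc d → ℝ}

lemma zero_mem_divSet : (0 : ℝ) ∈ divSet f :=
  ⟨0, contDiff_const, HasCompactSupport.zero, by simp, by simp⟩

lemma variation_nonneg (hBV : BddAbove (divSet f)) : 0 ≤ variation f :=
  le_csSup hBV zero_mem_divSet

lemma sum_fderiv_smul_const_apply_single {g : Euc d → ℝ} {x : Euc d}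
    (hg : DifferentiableAt ℝ g x) (w : Euc d) :
    ∑ i, fderiv ℝ (fun y => g y • w) x (EuclideanSpace.single i 1) i = fderiv ℝ g x w := by
  rw [fderiv_smul_const hg w]
  conv_rhs => rw [← (EuclideanSpace.basisFun (Fin d) ℝ).sum_repr w]
  simp [map_sum, mul_comm]

lemma integral_mul_fderiv_apply_le_variation (hBV : BddAbove (divSet f)) {g : Euc d → ℝ}
    (hg : ContDiff ℝ 1 g) (hgs : HasCompactSupport g) (hg1 : ∀ y, |g y| ≤ 1) {w : Euc d}
    (hw : ‖w‖ ≤ 1) : ∫ y, f y * fderiv ℝ g y w ≤ variation f := by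
  -- the divergence of the test field `g • w` is `∂_w g`
  refine le_csSup hBV ⟨fun y => g y • w, hg.smul contDiff_const, hgs.smul_right,
    fun y => ?_, ?_⟩
  · rw [norm_smul, Real.norm_eq_abs]
    exact mul_le_one₀ (hg1 y) (norm_nonneg w) hw
  · simp only [sum_fderiv_smul_const_apply_single (hg.differentiable one_ne_zero _)]

lemma abs_integral_mul_fderiv_apply_le_variation (hBV : BddAbove (divSet f)) {g : Euc d → ℝ}
    (hg : ContDiff ℝ 1 g) (hgs : HasCompactSupport g) (hg1 : ∀ y, |g y| ≤ 1) {w : Euc d}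
    (hw : ‖w‖ ≤ 1) : |∫ y, f y * fderiv ℝ g y w| ≤ variation f := by
  have hneg := integral_mul_fderiv_apply_le_variation hBV hg hgs hg1 (w := -w) (by simpa)
  simp only [map_neg, mul_neg, integral_neg] at hneg
  exact abs_le.2 ⟨by linarith, integral_mul_fderiv_apply_le_variation hBV hg hgs hg1 hw⟩

theorem lipschitzWith_integral_mul_comp_sub (hf : LocallyIntegrable f) (hBV : BddAbove (divSet f))
    {g : Euc d → ℝ} (hg : ContDiff ℝ 1 g) (hgs : HasCompactSupport g) (hg1 : ∀ y, |g y| ≤ 1) :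
    LipschitzWith (variation f).toNNReal (fun h => ∫ y, f y * g (y - h)) := by
  set g' : Euc d → ℝ := fun y => g (-y)
  have hg' : ContDiff ℝ 1 g' := hg.comp contDiff_neg
  have hg's : HasCompactSupport g' := hgs.comp_homeomorph (Homeomorph.neg _)
  have hconv : (fun h => ∫ y, f y * g (y - h)) = f ⋆[ContinuousLinearMap.lsmul ℝ ℝ, volume] g' := by
    ext h
    simp [convolution_lsmul, g']
  have hderiv (h w : Euc d) :
      fderiv ℝ (f ⋆[ContinuousLinearMap.lsmul ℝ ℝ, volume] g') h w =
        ∫ y, f y * fderiv ℝ (fun y => g (y - h)) y (-w) := by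
    have hg'_deriv (a : Euc d) : fderiv ℝ g' a w = fderiv ℝ g (-a) (-w) := by
      have hd : HasFDerivAt g' ((fderiv ℝ g (-a)).comp (-ContinuousLinearMap.id ℝ _)) a :=
        (hg.differentiable one_ne_zero (-a)).hasFDerivAt.comp a (hasFDerivAt_id a).neg
      simp [hd.fderiv]
    rw [(hg's.hasFDerivAt_convolution_right _ hf hg' h).fderiv,
      convolution_precompR_apply _ hf (hg's.fderiv ℝ) (hg'.continuous_fderiv one_ne_zero),
      convolution_lsmul]
    simp [hg'_deriv, fderiv_comp_sub]
  rw [hconv]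
  refine lipschitzWith_of_nnnorm_fderiv_le
    (fun h => (hg's.hasFDerivAt_convolution_right _ hf hg' h).differentiableAt) fun h => ?_
  rw [← NNReal.coe_le_coe, coe_nnnorm]
  refine ContinuousLinearMap.opNorm_le_of_unit_norm NNReal.zero_le_coe fun w hw => ?_
  rw [hderiv, Real.norm_eq_abs, Real.coe_toNNReal _ (variation_nonneg hBV)]
  exact abs_integral_mul_fderiv_apply_le_variation hBV (hg.comp (contDiff_id.sub contDiff_const))
    (hgs.comp_homeomorph (Homeomorph.subRight h)) (fun y => hg1 _) (by simp [hw])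

lemma tendsto_integral_mul_contDiffBump {ι : Type*} {l : Filter ι} [l.IsCountablyGenerated]
    (hf : LocallyIntegrable f) {φ : ι → ContDiffBump (0 : Euc d)} {r : ℝ}
    (hout : ∀ i, (φ i).rOut = r) (hin : Tendsto (fun i => (φ i).rIn) l (𝓝 r)) (p : Euc d) :
    Tendsto (fun i => ∫ y, f y * φ i (y - p)) l (𝓝 (∫ y in ball p r, f y)) := by
  have hsupp (i : ι) (y : Euc d) (hy : y ∉ ball p r) : φ i (y - p) = 0 := by
    refine Function.notMem_support.1 fun h => hy ?_
    rw [(φ i).support_eq, hout, mem_ball, dist_zero_right, ← dist_eq_norm] at h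
    exact h
  rw [← integral_indicator measurableSet_ball]
  refine tendsto_integral_filter_of_dominated_convergence ((ball p r).indicator fun y => |f y|)
    (.of_forall fun i => hf.aestronglyMeasurable.mul ((φ i).continuous.comp
      (continuous_id.sub continuous_const)).aestronglyMeasurable)
    (.of_forall fun i => .of_forall fun y => ?_)
    ((integrable_indicator_iff measurableSet_ball).2
      ((hf.integrableOn_isCompact (isCompact_closedBall p r)).mono_set ball_subset_closedBall).abs)
    (.of_forall fun y => ?_)
  · by_cases hy : y ∈ ball p r
    · rw [indicator_of_mem hy, norm_mul, Real.norm_eq_abs, Real.norm_of_nonneg (φ i).nonneg]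
      exact mul_le_of_le_one_right (abs_nonneg _) (φ i).le_one
    · simp [hsupp i y hy, indicator_of_notMem hy]
  · by_cases hy : y ∈ ball p r
    · rw [indicator_of_mem hy]
      refine tendsto_const_nhds.congr' ?_
      filter_upwards [hin.eventually (eventually_ge_nhds (mem_ball_iff_norm.1 hy))] with i hi
      rw [(φ i).one_of_mem_closedBall (by simpa using hi), mul_one]
    · simpa [hsupp _ y hy, indicator_of_notMem hy] using tendsto_const_nhds

theorem lipschitzWith_setIntegral_ball (hf : LocallyIntegrable f) (hBV : BddAbove (divSet f))
    (r : ℝ) : LipschitzWith (variation f).toNNReal (fun p => ∫ y in ball p r, f y) := by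
  rcases le_or_gt r 0 with hr | hr
  · simpa [ball_eq_empty.2 hr] using LipschitzWith.const' (0 : ℝ)
  obtain ⟨u, -, hu, hlim⟩ := exists_seq_strictMono_tendsto' hr
  let φ (n : ℕ) : ContDiffBump (0 : Euc d) := ⟨u n, r, (hu n).1, (hu n).2⟩
  have hφ (p : Euc d) := tendsto_integral_mul_contDiffBump hf (φ := φ) (fun _ => rfl) hlim p
  refine LipschitzWith.of_dist_le_mul fun p q => le_of_tendsto' ((hφ p).dist (hφ q)) fun n => ?_
  refine (lipschitzWith_integral_mul_comp_sub hf hBV (φ n).contDiff (φ n).hasCompactSupport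
    fun y => ?_).dist_le_mul p q
  rw [abs_of_nonneg (φ n).nonneg]
  exact (φ n).le_one

end Variation

section MaximalFunction
variable {d : ℕ} {α : ℝ} {f : Euc d → ℝ}

def scaledAverages (d : ℕ) (α : ℝ) (f : Euc d → ℝ) (I : Set ℝ) (x : Euc d) : Set ℝ :=
  {v | ∃ z : Euc d, ∃ r ∈ I, x ∈ ball z r ∧ v = r ^ α * setAvg (ball z r) f}

lemma Mu_eq_sSup_scaledAverages (x : Euc d) :
    Mu d α f x = sSup (scaledAverages d α f (Ioi 0) x) := rfl

lemma scaledAverages_mono {I J : Set ℝ} (h : I ⊆ J) (x : Euc d) :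
    scaledAverages d α f I x ⊆ scaledAverages d α f J x := by
  rintro v ⟨z, r, hr, hx, rfl⟩
  exact ⟨z, r, h hr, hx, rfl⟩

lemma mem_scaledAverages_self {I : Set ℝ} {r : ℝ} (hr : r ∈ I) (hr0 : 0 < r) (x : Euc d) :
    r ^ α * setAvg (ball x r) f ∈ scaledAverages d α f I x :=
  ⟨x, r, hr, mem_ball_self hr0, rfl⟩

lemma rpow_mul_setAvg_ball (z : Euc d) {r : ℝ} (hr : 0 < r) :
    r ^ α * setAvg (ball z r) f =
      (volume (ball (0 : Euc d) 1)).toReal⁻¹ * r ^ (α - d) * ∫ y in ball z r, f y := by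
  rw [setAvg, Measure.addHaar_ball_of_pos _ z hr, ENNReal.toReal_mul,
    ENNReal.toReal_ofReal (pow_nonneg hr.le _), finrank_euclideanSpace_fin,
    Real.rpow_sub hr, Real.rpow_natCast, mul_inv]
  ring

lemma setAvg_nonneg (hf : 0 ≤ f) (s : Set (Euc d)) : 0 ≤ setAvg s f :=
  mul_nonneg (inv_nonneg.2 ENNReal.toReal_nonneg) (integral_nonneg hf)

lemma setAvg_le_lpNorm_top (hfb : MemLp f ∞ volume) (s : Set (Euc d)) :
    setAvg s f ≤ lpNorm f ∞ volume := by
  rcases eq_or_ne (volume s) ⊤ with hs | hs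
  · simp [setAvg, hs]
  have hint := norm_setIntegral_le_of_norm_le_const_ae hs.lt_top
    (ae_restrict_of_ae (ae_le_lpNorm_exponent_top hfb))
  calc setAvg s f ≤ (volume s).toReal⁻¹ * (lpNorm f ∞ volume * volume.real s) :=
        mul_le_mul_of_nonneg_left ((le_abs_self _).trans hint) (by positivity)
    _ ≤ lpNorm f ∞ volume := by
        rw [measureReal_def, mul_left_comm]
        exact mul_le_of_le_one_right lpNorm_nonneg inv_mul_le_one

lemma setIntegral_ball_mono (hf : 0 ≤ f) (hfi : LocallyIntegrable f) {z z' : Euc d} {r r' : ℝ}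
    (h : ball z r ⊆ ball z' r') : ∫ y in ball z r, f y ≤ ∫ y in ball z' r', f y :=
  setIntegral_mono_set ((hfi.integrableOn_isCompact (isCompact_closedBall z' r')).mono_set
    ball_subset_closedBall) (.of_forall hf) h.eventuallyLE

lemma Mu_nonneg (hf : 0 ≤ f) (x : Euc d) : 0 ≤ Mu d α f x :=
  Real.sSup_nonneg fun _ ⟨_, _, hr, _, hv⟩ => hv ▸ mul_nonneg (Real.rpow_nonneg hr.le α)
    (setAvg_nonneg hf _)

lemma bddAbove_of_Mu_pos {x : Euc d} (h : 0 < Mu d α f x) :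
    BddAbove (scaledAverages d α f (Ioi 0) x) := by
  by_contra hb
  rw [Mu_eq_sSup_scaledAverages, Real.sSup_of_not_bddAbove hb] at h
  exact h.false

lemma exists_setIntegral_ball_pos_of_Mu_pos {x : Euc d} (h : 0 < Mu d α f x) :
    ∃ c : Euc d, ∃ ρ > 0, 0 < ∫ y in ball c ρ, f y := by
  by_contra! hcon
  refine h.not_ge (Real.sSup_nonpos fun _ ⟨z, r, hr, _, hv⟩ => hv ▸
    mul_nonpos_of_nonneg_of_nonpos (Real.rpow_nonneg hr.le α)
    (mul_nonpos_of_nonneg_of_nonpos (inv_nonneg.2 ENNReal.toReal_nonneg) (hcon z r hr)))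

lemma rpow_mul_setAvg_ball_pos (hf : 0 ≤ f) (hfi : LocallyIntegrable f) {c : Euc d} {ρ r : ℝ}
    (hρ : 0 < ρ) (hI : 0 < ∫ y in ball c ρ, f y) (hρr : ρ ≤ r) :
    0 < r ^ α * setAvg (ball c r) f := by
  have hr : 0 < r := hρ.trans_le hρr
  rw [rpow_mul_setAvg_ball c hr]
  refine mul_pos (mul_pos (inv_pos.2 ?_) (Real.rpow_pos_of_pos hr _))
    (hI.trans_le (setIntegral_ball_mono hf hfi (ball_subset_ball hρr)))
  exact ENNReal.toReal_pos (measure_ball_pos _ _ one_pos).ne' measure_ball_lt_top.ne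

lemma Mu_pos_of_bddAbove (hf : 0 ≤ f) (hfi : LocallyIntegrable f) {x c : Euc d} {ρ : ℝ}
    (hb : BddAbove (scaledAverages d α f (Ioi 0) x)) (hρ : 0 < ρ)
    (hI : 0 < ∫ y in ball c ρ, f y) : 0 < Mu d α f x := by
  have hρ' : ρ ≤ dist x c + ρ := le_add_of_nonneg_left dist_nonneg
  refine (rpow_mul_setAvg_ball_pos (α := α) hf hfi hρ hI hρ').trans_le (le_csSup hb ?_)
  exact ⟨c, _, hρ.trans_le hρ', by simp [mem_ball, hρ], rfl⟩

lemma rpow_mul_setAvg_ball_le_of_subset (hf : 0 ≤ f) (hfi : LocallyIntegrable f)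
    {z z' : Euc d} {r r' : ℝ} (hr : 0 < r) (hr' : 0 < r') (h : ball z r ⊆ ball z' r') :
    r ^ α * setAvg (ball z r) f ≤ (r' / r) ^ (d - α) * (r' ^ α * setAvg (ball z' r') f) := by
  have hpow : (r' / r) ^ (d - α) * r' ^ (α - d) = r ^ (α - d) := by
    rw [Real.div_rpow hr'.le hr.le, ← neg_sub, Real.rpow_neg hr'.le, Real.rpow_neg hr.le]
    field_simp
  rw [rpow_mul_setAvg_ball z hr, rpow_mul_setAvg_ball z' hr', ← hpow]
  calc _ = (r' / r) ^ (d - α) * ((volume (ball (0 : Euc d) 1)).toReal⁻¹ * r' ^ (α - d) *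
        ∫ y in ball z r, f y) := by ring
    _ ≤ _ := by
      have := setIntegral_ball_mono hf hfi h
      gcongr

lemma bddAbove_scaledAverages_of_bddAbove (hα : 0 ≤ α) (hαd : α ≤ d) (hf : 0 ≤ f)
    (hfb : MemLp f ∞ volume) {x y : Euc d} (hb : BddAbove (scaledAverages d α f (Ioi 0) y)) :
    BddAbove (scaledAverages d α f (Ioi 0) x) := by
  obtain ⟨M, hM⟩ := hb
  set D := dist x y
  refine ⟨max (lpNorm f ∞ volume) ((1 + D) ^ (d - α) * M), ?_⟩
  rintro _ ⟨z, r, hr, hx, rfl⟩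
  have hr : 0 < r := hr
  rcases le_or_gt r 1 with hr1 | hr1
  · refine le_max_of_le_left ?_
    simpa using mul_le_mul (Real.rpow_le_one hr.le hr1 hα) (setAvg_le_lpNorm_top hfb _)
      (setAvg_nonneg hf _) zero_le_one
  -- for `r ≥ 1`, the ball `B(z, r + D)` contains `y` and is comparable to `B(z, r)`
  refine le_max_of_le_right ?_
  have hD : 0 ≤ D := dist_nonneg
  have hy : y ∈ ball z (r + D) := by
    rw [mem_ball] at hx ⊢
    linarith [dist_triangle y x z, dist_comm x y]
  have hfac : ((r + D) / r) ^ (d - α) ≤ (1 + D) ^ (d - α) := by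
    refine Real.rpow_le_rpow (by positivity) ?_ (sub_nonneg.2 hαd)
    rw [div_le_iff₀ hr]
    nlinarith
  calc _ ≤ ((r + D) / r) ^ (d - α) * ((r + D) ^ α * setAvg (ball z (r + D)) f) :=
        rpow_mul_setAvg_ball_le_of_subset hf (hfb.locallyIntegrable le_top) hr (by positivity)
          (ball_subset_ball (by linarith))
    _ ≤ (1 + D) ^ (d - α) * ((r + D) ^ α * setAvg (ball z (r + D)) f) :=
        mul_le_mul_of_nonneg_right hfac
          (mul_nonneg (Real.rpow_nonneg (by positivity) α) (setAvg_nonneg hf _))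
    _ ≤ _ := mul_le_mul_of_nonneg_left (hM ⟨z, r + D, add_pos_of_pos_of_nonneg hr hD, hy, rfl⟩)
          (by positivity)

lemma Mu_pos_of_Mu_pos (hα : 0 ≤ α) (hαd : α ≤ d) (hf : 0 ≤ f) (hfb : MemLp f ∞ volume)
    {x y : Euc d} (hy : 0 < Mu d α f y) : 0 < Mu d α f x := by
  obtain ⟨c, ρ, hρ, hI⟩ := exists_setIntegral_ball_pos_of_Mu_pos hy
  exact Mu_pos_of_bddAbove hf (hfb.locallyIntegrable le_top)
    (bddAbove_scaledAverages_of_bddAbove hα hαd hf hfb (bddAbove_of_Mu_pos hy)) hρ hI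

lemma exists_radius_Mu_eq_sSup (hα : 0 < α) (hf : 0 ≤ f) (hfb : MemLp f ∞ volume)
    (hpos : ∀ x, 0 < Mu d α f x) (z : Euc d) (R : ℝ) :
    ∃ r0 > 0, ∀ x ∈ ball z R, Mu d α f x = sSup (scaledAverages d α f (Ici r0) x) := by
  obtain ⟨c, ρ, hρ, hI⟩ := exists_setIntegral_ball_pos_of_Mu_pos (hpos z)
  -- `B(c, r1)` contains `B(z, R)` and carries mass, so small balls cannot beat it
  set r1 := max (dist z c + R) ρ
  have hball : ∀ x ∈ ball z R, x ∈ ball c r1 := fun x hx => by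
    rw [mem_ball] at hx ⊢
    linarith [dist_triangle x z c, le_max_left (dist z c + R) ρ]
  have hρr1 : ρ ≤ r1 := le_max_right _ _
  set m := r1 ^ α * setAvg (ball c r1) f
  have hm : 0 < m := rpow_mul_setAvg_ball_pos hf (hfb.locallyIntegrable le_top) hρ hI hρr1
  have hsmall : Tendsto (fun r : ℝ => r ^ α * lpNorm f ∞ volume) (𝓝[>] 0) (𝓝 0) := by
    simpa [Real.zero_rpow hα.ne'] using
      ((Real.continuousAt_rpow_const 0 α (Or.inr hα.le)).tendsto.mul_const _).mono_left
        nhdsWithin_le_nhds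
  obtain ⟨r0, hr0m, hr0⟩ :=
    ((hsmall.eventually (gt_mem_nhds hm)).and (Ioo_mem_nhdsGT (hρ.trans_le hρr1))).exists
  refine ⟨r0, hr0.1, fun x hx => ?_⟩
  have hsub := scaledAverages_mono (α := α) (f := f) (Ici_subset_Ioi.2 hr0.1) x
  have hbdd := (bddAbove_of_Mu_pos (hpos x)).mono hsub
  have hmx : m ∈ scaledAverages d α f (Ici r0) x := ⟨c, r1, hr0.2.le, hball x hx, rfl⟩
  refine le_antisymm (csSup_le ⟨_, mem_scaledAverages_self (mem_Ioi.2 one_pos) one_pos x⟩ ?_)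
    (csSup_le_csSup (bddAbove_of_Mu_pos (hpos x)) ⟨m, hmx⟩ hsub)
  rintro _ ⟨z', r, hr, hxz, rfl⟩
  have hr : 0 < r := hr
  rcases le_or_gt r0 r with hr0r | hrr0
  · exact le_csSup hbdd ⟨z', r, hr0r, hxz, rfl⟩
  calc r ^ α * setAvg (ball z' r) f ≤ r ^ α * lpNorm f ∞ volume :=
        mul_le_mul_of_nonneg_left (setAvg_le_lpNorm_top hfb _) (Real.rpow_nonneg hr.le α)
    _ ≤ r0 ^ α * lpNorm f ∞ volume := by
        gcongr
        exact lpNorm_nonneg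
    _ ≤ m := hr0m.le
    _ ≤ _ := le_csSup hbdd hmx

lemma sSup_scaledAverages_Ici_le_add (hαd : α ≤ d) (hfi : LocallyIntegrable f)
    (hBV : BddAbove (divSet f)) {r0 : ℝ} (hr0 : 0 < r0) {x x' : Euc d}
    (hbdd : BddAbove (scaledAverages d α f (Ici r0) x')) :
    sSup (scaledAverages d α f (Ici r0) x) ≤ sSup (scaledAverages d α f (Ici r0) x') +
      (volume (ball (0 : Euc d) 1)).toReal⁻¹ * r0 ^ (α - d) * variation f * dist x x' := by
  refine csSup_le ⟨_, mem_scaledAverages_self self_mem_Ici hr0 x⟩ ?_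
  rintro _ ⟨z, r, hr, hx, rfl⟩
  have hr' : 0 < r := hr0.trans_le hr
  have hV := variation_nonneg hBV
  -- translating `B(z, r)` by `x' - x` gives a competing ball at `x'`
  have hx' : x' ∈ ball (z + (x' - x)) r := by
    rwa [mem_ball, dist_eq_norm, sub_add_eq_sub_sub, sub_sub_sub_cancel_left, ← dist_eq_norm]
  have hint := (lipschitzWith_setIntegral_ball hfi hBV r).le_add_mul z (z + (x' - x))
  rw [Real.coe_toNNReal _ hV, dist_self_add_right, ← dist_eq_norm, dist_comm] at hint
  have hpow : r ^ (α - d) ≤ r0 ^ (α - d) := Real.rpow_le_rpow_of_nonpos hr0 hr (sub_nonpos.2 hαd)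
  calc r ^ α * setAvg (ball z r) f
      ≤ (volume (ball (0 : Euc d) 1)).toReal⁻¹ * r ^ (α - d) *
          ((∫ y in ball (z + (x' - x)) r, f y) + variation f * dist x x') := by
        rw [rpow_mul_setAvg_ball z hr']
        gcongr
    _ = r ^ α * setAvg (ball (z + (x' - x)) r) f +
          (volume (ball (0 : Euc d) 1)).toReal⁻¹ * r ^ (α - d) * variation f * dist x x' := by
        rw [rpow_mul_setAvg_ball _ hr']
        ring
    _ ≤ _ := by
        gcongr
        exact le_csSup hbdd ⟨_, r, hr, hx', rfl⟩

lemma exists_radius_lipschitzOnWith_Mu (hα : 0 < α) (hαd : α ≤ d) (hf : 0 ≤ f)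
    (hfb : MemLp f ∞ volume) (hBV : BddAbove (divSet f)) {z : Euc d} (hz : 0 < Mu d α f z)
    (R : ℝ) : ∃ r0 > 0, (∀ x ∈ ball z R, Mu d α f x = sSup (scaledAverages d α f (Ici r0) x)) ∧
      LipschitzOnWith
        (Real.toNNReal ((volume (ball (0 : Euc d) 1)).toReal⁻¹ * r0 ^ (α - d) * variation f))
        (Mu d α f) (ball z R) := by
  have hpos (x : Euc d) : 0 < Mu d α f x := Mu_pos_of_Mu_pos hα.le hαd hf hfb hz
  obtain ⟨r0, hr0, hMu⟩ := exists_radius_Mu_eq_sSup hα hf hfb hpos z R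
  refine ⟨r0, hr0, hMu, LipschitzOnWith.of_le_add_mul' _ fun x hx x' hx' => ?_⟩
  rw [hMu x hx, hMu x' hx']
  exact sSup_scaledAverages_Ici_le_add hαd (hfb.locallyIntegrable le_top) hBV hr0
    ((bddAbove_of_Mu_pos (hpos x')).mono (scaledAverages_mono (Ici_subset_Ioi.2 hr0) x'))

end MaximalFunction

theorem stmt3 (d : ℕ) (α : ℝ) (hα : 0 < α) (hαd : α < d)
    (f : Euc d → ℝ) (hf : 0 ≤ f) (hfb : MemLp f ⊤ volume)
    (hBV : BddAbove (divSet f)) :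
    LocallyLipschitz (Mu d α f) ∧
    ∀ (z : Euc d) (R : ℝ), 0 < R → (∀ x ∈ ball z R, 0 < Mu d α f x) →
      ∃ r0 : ℝ, 0 < r0 ∧
        (∀ x ∈ ball z R, Mu d α f x =
          sSup {v | ∃ z' : Euc d, ∃ r' : ℝ, r0 ≤ r' ∧ x ∈ ball z' r' ∧
            v = r' ^ α * setAvg (ball z' r') f}) ∧
        LipschitzOnWith
          (Real.toNNReal ((volume (ball (0 : Euc d) 1)).toReal⁻¹ * r0 ^ (α - d) * variation f))
          (Mu d α f) (ball z R) := by
  have hradius (z : Euc d) (R : ℝ) (hz : 0 < Mu d α f z) :=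
    exists_radius_lipschitzOnWith_Mu hα hαd.le hf hfb hBV hz R
  refine ⟨fun x => ?_, fun z R hR hpos => hradius z R (hpos z (mem_ball_self hR))⟩
  by_cases hx : 0 < Mu d α f x
  · obtain ⟨_, -, -, hlip⟩ := hradius x 1 hx
    exact ⟨_, ball x 1, ball_mem_nhds x one_pos, hlip⟩
  · have hzero : Mu d α f = 0 := funext fun y =>
      (not_lt.1 fun hy => hx (Mu_pos_of_Mu_pos hα.le hαd.le hf hfb hy)).antisymm (Mu_nonneg hf y)
    rw [hzero]
    exact (LipschitzWith.const (0 : ℝ)).locallyLipschitz x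
end
end

section
/- Let 0 < α < d, 1 ≤ p < d/α, f ∈ L^p(ℝ^d) nonnegative, ε > 0. Then there is a subset T of Q_α such that: (a) for each Q ∈ Q_α with ℓ(Q)^α f_Q > ε there exists P ∈ T with Q ⊆ parent(P) and f_Q ≤ 2^d f_P; and (b) for any two Q, P ∈ T, either parent(Q) = parent(P), or parent(Q) ∩ parent(P) = ∅, or f_Q/f_P ∉ (2^{-d}, 2^d). -/
open MeasureTheory Metric Set Filter
open scoped ENNReal NNReal

noncomputable section

def dCube (d : ℕ) (n : ℤ) (k : Fin d → ℤ) : Set (Euc d) :=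
  {y | ∀ i, (k i : ℝ) * 2 ^ n ≤ y i ∧ y i < ((k i : ℝ) + 1) * 2 ^ n}

def cubeAvg {d : ℕ} (f : Euc d → ℝ) (n : ℤ) (k : Fin d → ℤ) : ℝ :=
  setAvg (dCube d n k) f

/-- `dCube d n k ∈ Q_α`. -/
def inQ (d : ℕ) (α : ℝ) (f : Euc d → ℝ) (n : ℤ) (k : Fin d → ℤ) : Prop :=
  ∀ m : ℤ, ∀ j : Fin d → ℤ, dCube d n k ⊂ dCube d m j →
    ((2 : ℝ) ^ m) ^ α * cubeAvg f m j < ((2 : ℝ) ^ n) ^ α * cubeAvg f n k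

/-- The dyadic parent of a dyadic cube (encoded as an index pair). -/
def dParent (d : ℕ) (Q : ℤ × (Fin d → ℤ)) : ℤ × (Fin d → ℤ) :=
  (Q.1 + 1, fun i => Int.fdiv (Q.2 i) 2)

/-!
By Hölder, `ℓ(Q)^α f_Q ≤ ‖f‖_p ℓ(Q)^{α - d/p}`, and `α < d/p`, so the cubes with
`ℓ(Q)^α f_Q > ε` live at levels bounded above. They can therefore be selected by a stopping time
run from the top level down: `Q` is kept unless the parent of some already kept `P` strictly
contains the parent of `Q` and `f_Q < 2^d f_P`. A discarded cube is covered by such a `P`; for two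
kept cubes with nested distinct parents the averages differ by a factor at least `2^d`; and
distinct dyadic cubes are otherwise disjoint.
-/

open scoped Topology

lemma floor_div_two_zpow_add_one (r : ℝ) (n : ℤ) : ⌊r / 2 ^ (n + 1)⌋ = ⌊r / 2 ^ n⌋ / 2 := by
  rw [zpow_add_one₀ two_ne_zero, ← div_div]
  exact_mod_cast Int.floor_div_natCast (r / 2 ^ n) 2

lemma floor_div_two_zpow_congr {x y : ℝ} {m m' : ℤ} (hm : m ≤ m')
    (h : ⌊x / 2 ^ m⌋ = ⌊y / 2 ^ m⌋) : ⌊x / 2 ^ m'⌋ = ⌊y / 2 ^ m'⌋ := by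
  induction m', hm using Int.leInduction with
  | base => exact h
  | succ n _ ih => rw [floor_div_two_zpow_add_one, floor_div_two_zpow_add_one, ih]

section DyadicCube

variable {d : ℕ}

lemma mem_dCube_iff {n : ℤ} {k : Fin d → ℤ} {y : Euc d} :
    y ∈ dCube d n k ↔ ∀ i, ⌊y i / 2 ^ n⌋ = k i := by
  have h2n : (0 : ℝ) < 2 ^ n := zpow_pos two_pos n
  simp only [dCube, mem_ofPred_eq, Int.floor_eq_iff, le_div_iff₀ h2n, div_lt_iff₀ h2n]

lemma dCube_nonempty (n : ℤ) (k : Fin d → ℤ) : (dCube d n k).Nonempty :=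
  ⟨WithLp.toLp 2 fun i => k i * 2 ^ n, mem_dCube_iff.2 fun i => by
    rw [mul_div_cancel_right₀ _ (zpow_ne_zero n two_ne_zero), Int.floor_intCast]⟩

lemma dCube_subset_of_le {m m' : ℤ} {j j' : Fin d → ℤ} (hm : m ≤ m')
    (h : (dCube d m j ∩ dCube d m' j').Nonempty) : dCube d m j ⊆ dCube d m' j' := by
  obtain ⟨x, hx, hx'⟩ := h
  intro y hy
  rw [mem_dCube_iff] at hx hx' hy ⊢
  intro i
  rw [← hx' i]
  exact floor_div_two_zpow_congr hm ((hy i).trans (hx i).symm)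

lemma dCube_subset_or_subset {m m' : ℤ} {j j' : Fin d → ℤ}
    (h : (dCube d m j ∩ dCube d m' j').Nonempty) :
    dCube d m j ⊆ dCube d m' j' ∨ dCube d m' j' ⊆ dCube d m j := by
  rcases le_total m m' with hm | hm
  · exact Or.inl (dCube_subset_of_le hm h)
  · exact Or.inr (dCube_subset_of_le hm (inter_comm _ _ ▸ h))

lemma dCube_eq_or_disjoint_or_ssubset (m m' : ℤ) (j j' : Fin d → ℤ) :
    dCube d m j = dCube d m' j' ∨ dCube d m j ∩ dCube d m' j' = ∅ ∨
      dCube d m j ⊂ dCube d m' j' ∨ dCube d m' j' ⊂ dCube d m j := by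
  rcases (dCube d m j ∩ dCube d m' j').eq_empty_or_nonempty with h | h
  · exact Or.inr (Or.inl h)
  rcases dCube_subset_or_subset h with hs | hs <;> rcases hs.ssubset_or_eq with hs | hs
  all_goals tauto

lemma lt_of_dCube_ssubset {n m : ℤ} {k j : Fin d → ℤ} (h : dCube d n k ⊂ dCube d m j) :
    n < m := by
  by_contra! hmn
  obtain ⟨x, hx⟩ := dCube_nonempty n k
  exact h.2 (dCube_subset_of_le hmn ⟨x, h.1 hx, hx⟩)

lemma dCube_subset_dParent (Q : ℤ × (Fin d → ℤ)) :
    dCube d Q.1 Q.2 ⊆ dCube d (dParent d Q).1 (dParent d Q).2 := by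
  intro y hy
  rw [mem_dCube_iff] at hy ⊢
  intro i
  change ⌊y i / 2 ^ (Q.1 + 1)⌋ = Int.fdiv (Q.2 i) 2
  rw [floor_div_two_zpow_add_one, hy i]
  exact (Int.fdiv_eq_ediv_of_nonneg _ zero_le_two).symm

lemma volume_dCube (n : ℤ) (k : Fin d → ℤ) :
    volume (dCube d n k) = ENNReal.ofReal ((2 : ℝ) ^ n) ^ d := by
  have hset : dCube d n k = (MeasurableEquiv.toLp 2 (Fin d → ℝ)).symm ⁻¹'
      univ.pi fun i => Ico ((k i : ℝ) * 2 ^ n) (((k i : ℝ) + 1) * 2 ^ n) := by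
    ext y
    simp only [dCube, mem_ofPred_eq, mem_preimage, mem_univ_pi, mem_Ico]
    rfl
  rw [hset, (EuclideanSpace.volume_preserving_symm_measurableEquiv_toLp (Fin d)).measure_preimage
    (MeasurableSet.univ_pi fun i => measurableSet_Ico).nullMeasurableSet, volume_pi_pi]
  simp only [Real.volume_Ico, add_mul, one_mul, add_sub_cancel_left, Finset.prod_const,
    Finset.card_univ, Fintype.card_fin]

lemma volume_dCube_toReal (n : ℤ) (k : Fin d → ℤ) :
    (volume (dCube d n k)).toReal = ((2 : ℝ) ^ n) ^ d := by
  rw [volume_dCube, ENNReal.toReal_pow, ENNReal.toReal_ofReal (zpow_pos two_pos n).le]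

lemma setIntegral_le_toReal_eLpNorm_one {f : Euc d → ℝ} (hf : AEStronglyMeasurable f volume)
    (s : Set (Euc d)) : ∫ y in s, f y ≤ (eLpNorm f 1 (volume.restrict s)).toReal := by
  calc ∫ y in s, f y ≤ ‖∫ y in s, f y‖ := le_abs_self _
    _ ≤ ∫ y in s, ‖f y‖ := norm_integral_le_integral_norm _
    _ = (eLpNorm f 1 (volume.restrict s)).toReal := by
      rw [integral_norm_eq_lintegral_enorm hf.restrict, eLpNorm_one_eq_lintegral_enorm]

lemma setAvg_le_eLpNorm_mul_rpow {p : ℝ} (hp : 1 ≤ p) {f : Euc d → ℝ}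
    (hf : MemLp f (ENNReal.ofReal p) volume) {s : Set (Euc d)} (hs₀ : volume s ≠ 0)
    (hs : volume s ≠ ⊤) :
    setAvg s f ≤ (eLpNorm f (ENNReal.ofReal p) volume).toReal * (volume s).toReal ^ (-(1 / p)) := by
  have hV : 0 < (volume s).toReal := ENNReal.toReal_pos hs₀ hs
  have hexp : 0 ≤ 1 - 1 / p := sub_nonneg.2 (div_le_one_of_le₀ hp (by linarith))
  have holder : eLpNorm f 1 (volume.restrict s) ≤
      eLpNorm f (ENNReal.ofReal p) volume * volume s ^ (1 - 1 / p) := by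
    have h := eLpNorm_le_eLpNorm_mul_rpow_measure_univ (μ := volume.restrict s)
      (ENNReal.one_le_ofReal.2 hp) hf.1.restrict
    rw [Measure.restrict_apply_univ, ENNReal.toReal_one,
      ENNReal.toReal_ofReal (by linarith), div_one] at h
    exact h.trans (mul_le_mul_left (eLpNorm_mono_measure f Measure.restrict_le_self) _)
  have holder' : (eLpNorm f 1 (volume.restrict s)).toReal ≤
      (eLpNorm f (ENNReal.ofReal p) volume).toReal * (volume s).toReal ^ (1 - 1 / p) := by
    rw [ENNReal.toReal_rpow, ← ENNReal.toReal_mul]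
    exact ENNReal.toReal_mono (ENNReal.mul_ne_top hf.2.ne (ENNReal.rpow_ne_top_of_nonneg hexp hs))
      holder
  calc setAvg s f ≤ (volume s).toReal⁻¹ *
        ((eLpNorm f (ENNReal.ofReal p) volume).toReal * (volume s).toReal ^ (1 - 1 / p)) :=
        mul_le_mul_of_nonneg_left ((setIntegral_le_toReal_eLpNorm_one hf.1 s).trans holder')
          (inv_nonneg.2 hV.le)
    _ = _ := by
      rw [show -(1 / p) = -1 + (1 - 1 / p) by ring, Real.rpow_add hV, Real.rpow_neg_one]
      ring

lemma rpow_mul_cubeAvg_le {α p : ℝ} (hp : 1 ≤ p) {f : Euc d → ℝ}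
    (hf : MemLp f (ENNReal.ofReal p) volume) (n : ℤ) (k : Fin d → ℤ) :
    ((2 : ℝ) ^ n) ^ α * cubeAvg f n k ≤
      (eLpNorm f (ENNReal.ofReal p) volume).toReal * ((2 : ℝ) ^ (α - d / p)) ^ (n : ℝ) := by
  have h2n : (0 : ℝ) < 2 ^ n := zpow_pos two_pos n
  have hvol := setAvg_le_eLpNorm_mul_rpow hp hf (s := dCube d n k)
    (by simp [volume_dCube, h2n]) (by simp [volume_dCube])
  rw [volume_dCube_toReal] at hvol
  calc ((2 : ℝ) ^ n) ^ α * cubeAvg f n k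
      ≤ ((2 : ℝ) ^ n) ^ α * ((eLpNorm f (ENNReal.ofReal p) volume).toReal *
          (((2 : ℝ) ^ n) ^ d) ^ (-(1 / p))) := by gcongr; exact hvol
    _ = (eLpNorm f (ENNReal.ofReal p) volume).toReal * ((2 : ℝ) ^ n) ^ (α - d / p) := by
      rw [← Real.rpow_natCast, ← Real.rpow_mul h2n.le, sub_eq_add_neg,
        Real.rpow_add h2n, mul_neg, mul_one_div]
      ring
    _ = _ := by
      rw [← Real.rpow_intCast, ← Real.rpow_mul zero_le_two, ← Real.rpow_mul zero_le_two,
        mul_comm (n : ℝ)]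

lemma exists_level_bound {α p : ℝ} (hp : 1 ≤ p) (hαp : α < d / p) {f : Euc d → ℝ}
    (hf : MemLp f (ENNReal.ofReal p) volume) {ε : ℝ} (hε : 0 < ε) :
    ∃ N : ℤ, ∀ n k, ε < ((2 : ℝ) ^ n) ^ α * cubeAvg f n k → n ≤ N := by
  have hb : (2 : ℝ) ^ (α - d / p) < 1 := Real.rpow_lt_one_of_one_lt_of_neg one_lt_two (by linarith)
  have hlim : Tendsto (fun n : ℤ => (eLpNorm f (ENNReal.ofReal p) volume).toReal *
      ((2 : ℝ) ^ (α - d / p)) ^ (n : ℝ)) atTop (𝓝 0) := by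
    simpa using ((tendsto_rpow_atTop_of_base_lt_one _
      (by linarith [Real.rpow_pos_of_pos two_pos (α - d / p)]) hb).comp
      tendsto_intCast_atTop_atTop).const_mul _
  obtain ⟨N, hN⟩ := eventually_atTop.1 (hlim.eventually_lt_const hε)
  refine ⟨N, fun n k hn => ?_⟩
  by_contra! hNn
  exact (hn.trans_le (rpow_mul_cubeAvg_le hp hf n k)).not_gt (hN n hNn.le)

end DyadicCube

section StoppingTime

variable {ι : Type*} {S : Set ι} {R : ι → ι → Prop}

lemma wellFounded_of_level_le (level : ι → ℤ) {N : ℤ} (hN : ∀ Q ∈ S, level Q ≤ N)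
    (hR : ∀ Q P, R Q P → level Q < level P) : WellFounded fun P Q => P ∈ S ∧ R Q P :=
  Subrelation.wf (r := InvImage (· < ·) fun Q => (N - level Q).toNat)
    (fun {P Q} ⟨hP, hQP⟩ => by have := hN P hP; have := hR Q P hQP; dsimp [InvImage]; omega)
    (InvImage.wf _ wellFounded_lt)

lemma exists_stopping_subset (hwf : WellFounded fun P Q => P ∈ S ∧ R Q P) (F : ι → ℝ) (c : ℝ) :
    ∃ T ⊆ S, (∀ Q ∈ S, Q ∉ T → ∃ P ∈ T, R Q P ∧ F Q < c * F P) ∧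
      ∀ Q ∈ T, ∀ P ∈ T, R Q P → c * F P ≤ F Q := by
  let kept : ι → Prop := hwf.fix fun Q keptAbove =>
    Q ∈ S ∧ ∀ P (hP : P ∈ S ∧ R Q P), keptAbove P hP → c * F P ≤ F Q
  have kept_iff Q : kept Q ↔ Q ∈ S ∧ ∀ P, P ∈ S → R Q P → kept P → c * F P ≤ F Q := by
    rw [show kept Q = _ from hwf.fix_eq _ Q]
    exact and_congr_right' ⟨fun h P hP hQP => h P ⟨hP, hQP⟩, fun h P hP => h P hP.1 hP.2⟩
  refine ⟨{Q | kept Q}, fun Q hQ => ((kept_iff Q).1 hQ).1, fun Q hQ hQT => ?_,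
    fun Q hQ P hP hQP => ((kept_iff Q).1 hQ).2 P ((kept_iff P).1 hP).1 hQP hP⟩
  rw [mem_ofPred_eq, kept_iff] at hQT
  push Not at hQT
  obtain ⟨P, -, hQP, hP, hlt⟩ := hQT hQ
  exact ⟨P, hP, hQP, hlt⟩

end StoppingTime

lemma div_notMem_Ioo_of_mul_le {a b c : ℝ} (hb : 0 < b) (hc : 0 < c) (h : c * b ≤ a ∨ c * a ≤ b) :
    a / b ∉ Ioo c⁻¹ c := by
  rintro ⟨hlo, hhi⟩
  rcases h with h | h
  · exact hhi.not_ge ((le_div_iff₀ hb).2 (by linarith))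
  · exact hlo.not_ge ((div_le_iff₀ hb).2 (by rw [inv_mul_eq_div]; exact (le_div_iff₀' hc).2 h))

theorem stmt13_general (d : ℕ) (α p : ℝ) (hα : 0 < α)
    (hp : 1 ≤ p) (hpd : p < d / α)
    (f : Euc d → ℝ) (hfp : MemLp f (ENNReal.ofReal p) volume)
    (ε : ℝ) (hε : 0 < ε) :
    ∃ T : Set (ℤ × (Fin d → ℤ)),
      (∀ Q ∈ T, inQ d α f Q.1 Q.2) ∧
      (∀ Q : ℤ × (Fin d → ℤ), inQ d α f Q.1 Q.2 →
        ε < ((2 : ℝ) ^ Q.1) ^ α * cubeAvg f Q.1 Q.2 →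
        ∃ P ∈ T, dCube d Q.1 Q.2 ⊆ dCube d (dParent d P).1 (dParent d P).2 ∧
          cubeAvg f Q.1 Q.2 ≤ 2 ^ d * cubeAvg f P.1 P.2) ∧
      (∀ Q ∈ T, ∀ P ∈ T,
        dCube d (dParent d Q).1 (dParent d Q).2 = dCube d (dParent d P).1 (dParent d P).2 ∨
        dCube d (dParent d Q).1 (dParent d Q).2 ∩ dCube d (dParent d P).1 (dParent d P).2 = ∅ ∨
        cubeAvg f Q.1 Q.2 / cubeAvg f P.1 P.2 ∉ Ioo (((2 : ℝ) ^ d)⁻¹) ((2 : ℝ) ^ d)) := by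
  set S := {Q : ℤ × (Fin d → ℤ) | inQ d α f Q.1 Q.2 ∧ ε < ((2 : ℝ) ^ Q.1) ^ α * cubeAvg f Q.1 Q.2}
  have hαp : α < d / p := by
    rw [lt_div_iff₀ hα] at hpd
    rw [lt_div_iff₀ (by linarith)]
    linarith
  obtain ⟨N, hN⟩ := exists_level_bound hp hαp hfp hε
  have hwf := wellFounded_of_level_le (S := S)
    (R := fun Q P =>
      dCube d (dParent d Q).1 (dParent d Q).2 ⊂ dCube d (dParent d P).1 (dParent d P).2)
    Prod.fst (fun Q hQ => hN Q.1 Q.2 hQ.2) fun Q P h => by simpa [dParent] using lt_of_dCube_ssubset h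
  obtain ⟨T, hTS, hcover, hsep⟩ := exists_stopping_subset hwf (fun Q => cubeAvg f Q.1 Q.2) (2 ^ d)
  have hpos : ∀ Q ∈ T, 0 < cubeAvg f Q.1 Q.2 := fun Q hQ =>
    pos_of_mul_pos_right (hε.trans (hTS hQ).2) (Real.rpow_nonneg (zpow_pos two_pos _).le α)
  refine ⟨T, fun Q hQ => (hTS hQ).1, fun Q hQ hεQ => ?_, fun Q hQ P hP => ?_⟩
  · by_cases hQT : Q ∈ T
    · exact ⟨Q, hQT, dCube_subset_dParent Q,
        le_mul_of_one_le_left (hpos Q hQT).le (one_le_pow₀ one_le_two)⟩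
    · obtain ⟨P, hPT, hQP, hlt⟩ := hcover Q ⟨hQ, hεQ⟩ hQT
      exact ⟨P, hPT, (dCube_subset_dParent Q).trans hQP.subset, hlt.le⟩
  · rcases dCube_eq_or_disjoint_or_ssubset (dParent d Q).1 (dParent d P).1 (dParent d Q).2
      (dParent d P).2 with h | h | h | h
    · exact Or.inl h
    · exact Or.inr (Or.inl h)
    · exact Or.inr (Or.inr (div_notMem_Ioo_of_mul_le (hpos P hP) (by positivity)
        (Or.inl (hsep Q hQ P hP h))))
    · exact Or.inr (Or.inr (div_notMem_Ioo_of_mul_le (hpos P hP) (by positivity)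
        (Or.inr (hsep P hP Q hQ h))))

theorem stmt13 (d : ℕ) (α p : ℝ) (hα : 0 < α) (hαd : α < d)
    (hp : 1 ≤ p) (hpd : p < d / α)
    (f : Euc d → ℝ) (hf : 0 ≤ f) (hfp : MemLp f (ENNReal.ofReal p) volume)
    (ε : ℝ) (hε : 0 < ε) :
    ∃ T : Set (ℤ × (Fin d → ℤ)),
      (∀ Q ∈ T, inQ d α f Q.1 Q.2) ∧
      (∀ Q : ℤ × (Fin d → ℤ), inQ d α f Q.1 Q.2 →
        ε < ((2 : ℝ) ^ Q.1) ^ α * cubeAvg f Q.1 Q.2 →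
        ∃ P ∈ T, dCube d Q.1 Q.2 ⊆ dCube d (dParent d P).1 (dParent d P).2 ∧
          cubeAvg f Q.1 Q.2 ≤ 2 ^ d * cubeAvg f P.1 P.2) ∧
      (∀ Q ∈ T, ∀ P ∈ T,
        dCube d (dParent d Q).1 (dParent d Q).2 = dCube d (dParent d P).1 (dParent d P).2 ∨
        dCube d (dParent d Q).1 (dParent d Q).2 ∩ dCube d (dParent d P).1 (dParent d P).2 = ∅ ∨
        cubeAvg f Q.1 Q.2 / cubeAvg f P.1 P.2 ∉ Ioo (((2 : ℝ) ^ d)⁻¹) ((2 : ℝ) ^ d)) :=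
  stmt13_general d α p hα hp hpd f hfp ε hε
end
end
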